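/- Let σ be a stable modular tree with tail set T_σ. Then the number of colorings c : F_σ → {NS, R} of the flags of σ satisfying c∘j_σ = c and such that every vertex has an even number of adjacent flags of color R is exactly 2^{#T_σ − 1}. Equivalently, σ has exactly 2^{#T_σ − 1} preimages under the forgetful functor from stable SUSY trees to stable modular trees. -/

import Mathlib

inductive SColor : Type
  | NS : SColor
  | R : SColor
  deriving DecidableEq

instance : Fintype SColor :=
  ⟨{SColor.NS, SColor.R}, fun x => by cases x <;> simp⟩

/-- A graph in the sense of Borisov–Manin: a finite set of flags, a finite set of
vertices, a boundary map and an involution on flags. -/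
structure PreGraph where
  Flag : Type
  Vertex : Type
  [flagFintype : Fintype Flag]
  [flagDecEq : DecidableEq Flag]
  [vertexFintype : Fintype Vertex]
  [vertexDecEq : DecidableEq Vertex]
  bd : Flag → Vertex
  j : Flag → Flag
  j_invol : ∀ f, j (j f) = f

attribute [instance] PreGraph.flagFintype PreGraph.flagDecEq
attribute [instance] PreGraph.vertexFintype PreGraph.vertexDecEq

namespace PreGraph

variable (τ : PreGraph)

/-- Number of tails (fixed points of the involution). -/
def numTails : ℕ := (Finset.univ.filter fun f => τ.j f = f).card

/-- Number of edges (two-element orbits of the involution). -/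
def numEdges : ℕ := (Finset.univ.filter fun f => τ.j f ≠ f).card / 2

/-- Number of flags adjacent to a vertex. -/
def numFlagsAt (v : τ.Vertex) : ℕ := (Finset.univ.filter fun f => τ.bd f = v).card

/-- Connectedness of the geometric realization. -/
def Connected : Prop :=
  Nonempty τ.Vertex ∧ ∀ v w : τ.Vertex,
    Relation.ReflTransGen (fun a b => ∃ f, τ.bd f = a ∧ τ.bd (τ.j f) = b) v w

end PreGraph

/-- A modular graph: a graph with a genus labeling. -/
structure ModGraph extends PreGraph where
  genus : Vertex → ℕ

namespace ModGraph

variable (τ : ModGraph)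

/-- Stability: `2 g(v) - 2 + #F(v) > 0` at every vertex. -/
def Stable : Prop := ∀ v, 2 < 2 * τ.genus v + τ.numFlagsAt v

/-- A tree is a connected modular graph of genus zero, where the genus is
`Σ_v (g(v) - 1) + #E + 1`. -/
def IsTree : Prop :=
  τ.Connected ∧ (∑ v, ((τ.genus v : ℤ) - 1)) + (τ.numEdges : ℤ) + 1 = 0

end ModGraph

/-- A SUSY graph: a modular graph together with a coloring of the flags by
`NS`/`R`, constant on orbits of the involution, such that every vertex has an
even number of adjacent `R`-flags. -/
structure SUSYGraph extends ModGraph where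
  color : Flag → SColor
  color_j : ∀ f, color (j f) = color f
  even_R : ∀ v, Even ((Finset.univ.filter fun f => bd f = v ∧ color f = SColor.R).card)

namespace SUSYGraph

variable (τ : SUSYGraph)

def numFlagsAtC (v : τ.Vertex) (c : SColor) : ℕ :=
  (Finset.univ.filter fun f => τ.bd f = v ∧ τ.color f = c).card

def numFlagsC (c : SColor) : ℕ := (Finset.univ.filter fun f => τ.color f = c).card

def numTailsC (c : SColor) : ℕ :=
  (Finset.univ.filter fun f => τ.j f = f ∧ τ.color f = c).card

def numEdgesC (c : SColor) : ℕ :=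
  (Finset.univ.filter fun f => τ.j f ≠ f ∧ τ.color f = c).card / 2

end SUSYGraph

/-!
Encode a colouring by the indicator `x : F → ZMod 2` of its `R`-flags. The two conditions say
that `x` is constant on the orbits of `j` and that its boundary `∂x (v) = ∑_{∂f = v} x f`
vanishes, so the lifts form the kernel of `∂` on the `j`-invariant functions, a space of
dimension `#T + #E` (the number of orbits of `j`). On a connected graph with a tail `∂` is onto:
the tail gives `δ_v` at its vertex and an edge from `v` to `w` gives `δ_v + δ_w`. Hence there are
`2 ^ (#T + #E - #V)` lifts. On a tree, `#V ≤ #E + 1` (connectivity) and genus zero force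
`#V = #E + 1` and all genera to vanish; stability then gives at least three tails.
-/

open Finset

lemma LinearMap.natCard_eq_natCard_ker_mul {K M W : Type*} [Ring K] [AddCommGroup M]
    [AddCommGroup W] [Module K M] [Module K W] {g : M →ₗ[K] W} (hg : Function.Surjective g) :
    Nat.card M = Nat.card (LinearMap.ker g) * Nat.card W := by
  rw [← g.toAddMonoidHom.ker.card_mul_index, AddSubgroup.index_ker,
    AddMonoidHom.range_eq_top.2 hg, AddSubgroup.card_top]
  rfl

namespace PreGraph

variable (τ : PreGraph)

-- The orbits of this action are the tails and the edges of `τ`.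
instance : MulAction ℤˣ τ.Flag where
  smul u f := if u = 1 then f else τ.j f
  one_smul _ := if_pos rfl
  mul_smul u v f := by
    rcases Int.units_eq_one_or u with rfl | rfl <;> rcases Int.units_eq_one_or v with rfl | rfl <;>
      simp [HSMul.hSMul, τ.j_invol]

lemma j_involutive : Function.Involutive τ.j := τ.j_invol

lemma neg_one_smul_flag (f : τ.Flag) : (-1 : ℤˣ) • f = τ.j f := if_neg (by decide)

abbrev Orbit : Type := MulAction.orbitRel.Quotient ℤˣ τ.Flag

lemma card_orbit_mul_two : Nat.card τ.Orbit * 2 = Fintype.card τ.Flag + τ.numTails := by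
  classical
  have burnside := MulAction.sum_card_fixedBy_eq_card_orbits_mul_card_group ℤˣ τ.Flag
  rw [Fintype.sum_eq_add 1 (-1) (by decide) (fun u hu => absurd (Int.units_eq_one_or u) (by tauto))]
    at burnside
  simp only [Fintype.card_subtype, MulAction.mem_fixedBy, one_smul, neg_one_smul_flag,
    filter_true, Fintype.card_units_int] at burnside
  rw [Nat.card_eq_fintype_card, ← burnside, numTails, card_univ]

lemma card_flag : Fintype.card τ.Flag = τ.numTails + 2 * τ.numEdges := by
  have hsplit : τ.numTails + #{f | τ.j f ≠ f} = Fintype.card τ.Flag :=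
    card_filter_add_card_filter_not _
  have := τ.card_orbit_mul_two
  rw [numEdges]
  omega

lemma card_orbit : Nat.card τ.Orbit = τ.numTails + τ.numEdges := by
  have := τ.card_orbit_mul_two
  rw [card_flag] at this
  omega

section Invariants

variable (R : Type*) [Semiring R]

def invariants : Submodule R (τ.Flag → R) where
  carrier := {x | ∀ f, x (τ.j f) = x f}
  add_mem' hx hy f := by simp [hx f, hy f]
  zero_mem' _ := rfl
  smul_mem' c x hx f := by simp [hx f]

variable {τ R}

lemma apply_units_smul_of_mem_invariants {x : τ.Flag → R} (hx : x ∈ τ.invariants R) (u : ℤˣ)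
    (f : τ.Flag) : x (u • f) = x f := by
  rcases Int.units_eq_one_or u with rfl | rfl
  · rw [one_smul]
  · rw [neg_one_smul_flag, hx f]

variable (τ R)

def invariantsEquivOrbit : τ.invariants R ≃ (τ.Orbit → R) where
  toFun x := Quotient.lift x.1 fun _ b ⟨u, hu⟩ => hu ▸ apply_units_smul_of_mem_invariants x.2 u b
  invFun y := ⟨fun f => y ⟦f⟧, fun f => congrArg y (Quotient.sound ⟨-1, neg_one_smul_flag τ f⟩)⟩
  left_inv _ := rfl
  right_inv _ := funext (Quotient.ind fun _ => rfl)

lemma card_invariants [Finite R] :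
    Nat.card (τ.invariants R) = Nat.card R ^ (τ.numTails + τ.numEdges) := by
  rw [Nat.card_congr (τ.invariantsEquivOrbit R), Nat.card_fun, card_orbit]

def boundary : (τ.Flag → R) →ₗ[R] (τ.Vertex → R) where
  toFun x v := ∑ f with τ.bd f = v, x f
  map_add' _ _ := funext fun _ => sum_add_distrib
  map_smul' _ _ := funext fun _ => (mul_sum ..).symm

variable {τ R}

lemma boundary_apply (x : τ.Flag → R) (v : τ.Vertex) :
    τ.boundary R x v = ∑ f with τ.bd f = v, x f := rfl

lemma boundary_single (f : τ.Flag) : τ.boundary R (Pi.single f 1) = Pi.single (τ.bd f) 1 := by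
  ext v
  simp [boundary_apply, Pi.single_apply, eq_comm]

lemma single_add_single_j_mem_invariants (f : τ.Flag) :
    Pi.single f 1 + Pi.single (τ.j f) 1 ∈ τ.invariants R := by
  intro g
  simp only [Pi.add_apply, Pi.single_apply, τ.j_involutive.eq_iff, τ.j_invol]
  exact add_comm _ _

lemma single_mem_invariants_of_tail {t : τ.Flag} (ht : τ.j t = t) :
    Pi.single t 1 ∈ τ.invariants R := by
  intro g
  simp only [Pi.single_apply, τ.j_involutive.eq_iff, ht]

end Invariants

section Surjectivity

variable {τ} {R : Type*} [Ring R]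

theorem boundary_comp_invariants_surjective (hc : τ.Connected) {t : τ.Flag} (ht : τ.j t = t) :
    Function.Surjective (τ.boundary R ∘ₗ (τ.invariants R).subtype) := by
  set S := LinearMap.range (τ.boundary R ∘ₗ (τ.invariants R).subtype)
  have hmem : ∀ x ∈ τ.invariants R, τ.boundary R x ∈ S := fun x hx => ⟨⟨x, hx⟩, rfl⟩
  have hsingle : ∀ v, Pi.single v 1 ∈ S := by
    intro v
    induction hc.2 (τ.bd t) v with
    | refl => simpa [boundary_single] using hmem _ (single_mem_invariants_of_tail ht)
    | tail _ hstep ih =>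
      obtain ⟨f, rfl, rfl⟩ := hstep
      have hedge := hmem _ (single_add_single_j_mem_invariants (R := R) f)
      rw [map_add, boundary_single, boundary_single] at hedge
      simpa using S.sub_mem hedge ih
  rw [← LinearMap.range_eq_top, eq_top_iff, ← (Pi.basisFun R τ.Vertex).span_eq, Submodule.span_le]
  rintro _ ⟨v, rfl⟩
  simp only [Pi.basisFun_apply, SetLike.mem_coe]
  exact hsingle v

end Surjectivity

section Graph

def toSimpleGraph : SimpleGraph τ.Vertex :=
  SimpleGraph.fromRel fun a b => ∃ f, τ.bd f = a ∧ τ.bd (τ.j f) = b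

variable {τ}

lemma toSimpleGraph_adj_iff {a b : τ.Vertex} :
    τ.toSimpleGraph.Adj a b ↔ a ≠ b ∧ ∃ f, τ.bd f = a ∧ τ.bd (τ.j f) = b := by
  refine (SimpleGraph.fromRel_adj _ a b).trans (and_congr_right fun _ => or_iff_left_of_imp ?_)
  rintro ⟨f, rfl, rfl⟩
  exact ⟨τ.j f, rfl, by rw [τ.j_invol]⟩

lemma Connected.connected_toSimpleGraph (hc : τ.Connected) : τ.toSimpleGraph.Connected := by
  have := hc.1
  refine SimpleGraph.Connected.mk fun v w => ?_
  induction hc.2 v w with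
  | refl => rfl
  | tail _ hstep ih =>
    obtain ⟨f, rfl, rfl⟩ := hstep
    by_cases hloop : τ.bd f = τ.bd (τ.j f)
    · rwa [← hloop]
    · exact ih.trans (toSimpleGraph_adj_iff.2 ⟨hloop, f, rfl, rfl⟩).reachable

variable (τ)

lemma two_mul_card_edgeSet_le : 2 * Nat.card τ.toSimpleGraph.edgeSet ≤ #{f | τ.j f ≠ f} := by
  classical
  set P : Finset τ.Flag := {f | τ.j f ≠ f}
  let φ : τ.Flag → Sym2 τ.Vertex := fun f => s(τ.bd f, τ.bd (τ.j f))
  have hfiber : ∀ e ∈ τ.toSimpleGraph.edgeFinset, 2 ≤ #{f ∈ P | φ f = e} := by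
    intro e he
    induction e using Sym2.ind with | _ a b => ?_
    obtain ⟨hab, f, rfl, rfl⟩ := toSimpleGraph_adj_iff.1 (SimpleGraph.mem_edgeFinset.1 he)
    have hjf : τ.j f ≠ f := fun h => hab (by rw [h])
    refine one_lt_card.2 ⟨f, ?_, τ.j f, ?_, hjf.symm⟩
    · simp [P, φ, hjf]
    · simp [P, φ, τ.j_invol, hjf.symm]
  have hsub : τ.toSimpleGraph.edgeFinset ⊆ P.image φ := by
    intro e he
    obtain ⟨f, hf⟩ := card_pos.1 (lt_of_lt_of_le two_pos (hfiber e he))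
    exact mem_image.2 ⟨f, (mem_filter.1 hf).1, (mem_filter.1 hf).2⟩
  calc 2 * Nat.card τ.toSimpleGraph.edgeSet
      = ∑ _e ∈ τ.toSimpleGraph.edgeFinset, 2 := by
        rw [sum_const, smul_eq_mul, mul_comm, SimpleGraph.edgeFinset_card, Nat.card_eq_fintype_card]
    _ ≤ ∑ e ∈ τ.toSimpleGraph.edgeFinset, #{f ∈ P | φ f = e} := sum_le_sum hfiber
    _ ≤ ∑ e ∈ P.image φ, #{f ∈ P | φ f = e} := sum_le_sum_of_subset hsub
    _ = #P := (card_eq_sum_card_image φ P).symm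

variable {τ}

theorem Connected.card_vertex_le (hc : τ.Connected) : Fintype.card τ.Vertex ≤ τ.numEdges + 1 := by
  have hV := hc.connected_toSimpleGraph.card_vert_le_card_edgeSet_add_one
  have hE := τ.two_mul_card_edgeSet_le
  rw [Nat.card_eq_fintype_card] at hV
  rw [numEdges]
  omega

end Graph

end PreGraph

namespace ModGraph

variable {τ : ModGraph}

lemma IsTree.card_vertex_eq_and_genus_eq_zero (h : τ.IsTree) :
    Fintype.card τ.Vertex = τ.numEdges + 1 ∧ ∀ v, τ.genus v = 0 := by
  obtain ⟨hc, hgenus⟩ := h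
  have hle := hc.card_vertex_le
  have hsplit :
      ∑ v, ((τ.genus v : ℤ) - 1) = ((∑ v, τ.genus v : ℕ) : ℤ) - Fintype.card τ.Vertex := by
    simp [sum_sub_distrib]
  rw [hsplit] at hgenus
  have hsum : ∑ v, τ.genus v = 0 := by omega
  exact ⟨by omega, fun v => sum_eq_zero_iff.1 hsum v (mem_univ v)⟩

lemma IsTree.three_le_numTails (htree : τ.IsTree) (hstable : τ.Stable) : 3 ≤ τ.numTails := by
  obtain ⟨hV, hgenus⟩ := htree.card_vertex_eq_and_genus_eq_zero
  have hflags : ∑ v, τ.numFlagsAt v = Fintype.card τ.Flag :=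
    (card_eq_sum_card_fiberwise fun f _ => mem_univ (τ.bd f)).symm
  have h3 : ∑ _v : τ.Vertex, 3 ≤ ∑ v, τ.numFlagsAt v :=
    sum_le_sum fun v _ => by have := hstable v; rw [hgenus v] at this; omega
  rw [sum_const, card_univ, smul_eq_mul, hflags, τ.card_flag, hV] at h3
  omega

end ModGraph

def SColor.equivZModTwo : SColor ≃ ZMod 2 where
  toFun
    | .NS => 0
    | .R => 1
  invFun x := if x = 1 then .R else .NS
  left_inv c := by cases c <;> rfl
  right_inv x := by fin_cases x <;> rfl

lemma SColor.equivZModTwo_apply (c : SColor) : equivZModTwo c = if c = .R then 1 else 0 := by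
  cases c <;> rfl

namespace PreGraph

variable {τ : PreGraph}

lemma forall_even_iff_boundary_eq_zero (c : τ.Flag → SColor) :
    (∀ v, Even #{f | τ.bd f = v ∧ c f = .R}) ↔
      τ.boundary (ZMod 2) (SColor.equivZModTwo ∘ c) = 0 := by
  simp [funext_iff, boundary_apply, SColor.equivZModTwo_apply, sum_boole, filter_filter,
    ZMod.natCast_eq_zero_iff_even]

variable (τ)

def susyColoringEquiv :
    {c : τ.Flag → SColor //
        (∀ f, c (τ.j f) = c f) ∧ ∀ v, Even #{f | τ.bd f = v ∧ c f = SColor.R}} ≃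
      LinearMap.ker (τ.boundary (ZMod 2) ∘ₗ (τ.invariants (ZMod 2)).subtype) :=
  ((Equiv.arrowCongr (Equiv.refl _) SColor.equivZModTwo).subtypeEquiv fun c =>
      and_congr (forall_congr' fun _ => SColor.equivZModTwo.apply_eq_iff_eq.symm)
        (forall_even_iff_boundary_eq_zero c)).trans
    (Equiv.subtypeSubtypeEquivSubtypeInter (· ∈ τ.invariants (ZMod 2))
      fun x => τ.boundary (ZMod 2) x = 0).symm

end PreGraph

/-- A stable modular tree `σ` has exactly `2 ^ (#T_σ − 1)` colorings
`c : F_σ → {NS, R}` that are constant on orbits of the involution and give every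
vertex an even number of adjacent `R`-flags; equivalently, `σ` has exactly
`2 ^ (#T_σ − 1)` preimages under the forgetful functor from stable SUSY trees to
stable modular trees. -/
theorem ModGraph.card_SUSY_lifts (σ : ModGraph)
    (htree : σ.IsTree) (hstable : σ.Stable) :
    Nat.card {c : σ.Flag → SColor //
        (∀ f, c (σ.j f) = c f) ∧
        (∀ v, Even ((Finset.univ.filter fun f =>
          σ.bd f = v ∧ c f = SColor.R).card))}
      = 2 ^ (σ.numTails - 1) := by
  have hT := htree.three_le_numTails hstable
  obtain ⟨t, ht⟩ := card_pos.1 (show 0 < σ.numTails by omega)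
  have hcount := LinearMap.natCard_eq_natCard_ker_mul
    (σ.boundary_comp_invariants_surjective (R := ZMod 2) htree.1 (mem_filter.1 ht).2)
  rw [PreGraph.card_invariants, Nat.card_fun, Nat.card_zmod,
    Nat.card_eq_fintype_card (α := σ.Vertex), htree.card_vertex_eq_and_genus_eq_zero.1,
    ← Nat.card_congr σ.susyColoringEquiv] at hcount
  refine Nat.eq_of_mul_eq_mul_right (pow_pos two_pos (σ.numEdges + 1)) ?_
  rw [← hcount, ← pow_add]
  congr 1
  omega
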